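/- Every element of the separating set E_n (consisting of f_0,...,f_{⌊n/2⌋} and the invariants ε_{s_m}(x_j)) has degree at most 2n+1 as a polynomial in R_n. In particular, for 1 ≤ m ≤ ⌊(n−1)/2⌋ and m ≤ j ≤ n, the invariant ε_{s_m}(x_j) = ∑_{k=0}^{ν(x_j)} ((−1)^k/k!) D_n^k(x_j) s_m^k f_m^{ν(x_j)−k} has total degree 2ν(x_j)+1 where ν(x_j)=j, so its degree is at most 2n+1. -/

import Mathlib

open MvPolynomial Finset
open Fin.NatCast

noncomputable def Dw (K : Type) [CommRing K] (n : ℕ) :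
    Derivation K (MvPolynomial (Fin (n + 1)) K) (MvPolynomial (Fin (n + 1)) K) :=
  MvPolynomial.mkDerivation K fun i =>
    if i.1 = 0 then 0 else
      MvPolynomial.X ⟨i.1 - 1, Nat.lt_of_le_of_lt (Nat.sub_le _ _) i.isLt⟩

noncomputable def spoly (K : Type) [Field K] (n m : ℕ) : MvPolynomial (Fin (n + 1)) K :=
  ∑ k ∈ Finset.range (m + 1),
    (((-1 : K) ^ k) * ((2 * m + 1 - 2 * k : ℕ) : K) / 2) •
      (X ((k : ℕ) : Fin (n + 1)) * X ((2 * m + 1 - k : ℕ) : Fin (n + 1)))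

/-! `ε_{s_m}(x_j)` is homogeneous of degree `2j + 1`: `D^k x_j = x_{j-k}` is linear and `s_m`,
`f_m` are quadratic forms. So it only has to be nonzero. At a zero of `s_m` only the `k = 0` term
survives and `ε_{s_m}(x_j)` takes the value `x_j f_m^j`. Since
`f_m = ∑_{i<m} (-1)^i x_i x_{2m-i} + (-1)^m x_m^2 / 2`, the indicator point of `{m, j}` (of
`{m-1, m+1}` when `j = m + 1`) is a zero of `s_m` at which `f_m` is `(-1)^m / 2`
(resp. `(-1)^(m-1)`).
-/

section Derivation

variable {K : Type} [CommRing K] {n : ℕ}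

theorem Dw_X_eq_zero_or_exists (i : Fin (n + 1)) :
    Dw K n (X i) = 0 ∨ ∃ i', Dw K n (X i) = X i' := by
  rw [Dw, mkDerivation_X]
  split
  · exact .inl rfl
  · exact .inr ⟨_, rfl⟩

theorem isHomogeneous_Dw_iterate_X (k : ℕ) (i : Fin (n + 1)) :
    ((⇑(Dw K n))^[k] (X i)).IsHomogeneous 1 := by
  induction k generalizing i with
  | zero => exact isHomogeneous_X K i
  | succ k ih =>
    rw [Function.iterate_succ_apply]
    rcases Dw_X_eq_zero_or_exists (K := K) i with h | ⟨i', h⟩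
    · rw [h, Function.iterate_fixed (map_zero _)]
      exact isHomogeneous_zero _ _ _
    · rw [h]
      exact ih i'

theorem Dw_X_natCast_zero : Dw K n (X ((0 : ℕ) : Fin (n + 1))) = 0 := by
  simp [Dw, mkDerivation_X]

theorem Dw_X_natCast_succ {a : ℕ} (h : a < n) :
    Dw K n (X ((a + 1 : ℕ) : Fin (n + 1))) = X ((a : ℕ) : Fin (n + 1)) := by
  have hv : ((a + 1 : ℕ) : Fin (n + 1)).val = a + 1 := Fin.val_cast_of_lt (by omega)
  simp only [Dw, mkDerivation_X, hv, Nat.add_sub_cancel, a.succ_ne_zero, if_false]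
  congr
  exact (Fin.val_cast_of_lt (by omega)).symm

theorem aeval_X_natCast (ψ : ℕ → K) {a : ℕ} (h : a ≤ n) :
    aeval (ψ ∘ Fin.val) (X ((a : ℕ) : Fin (n + 1)) : MvPolynomial (Fin (n + 1)) K) = ψ a := by
  rw [aeval_X, Function.comp_apply, Fin.val_cast_of_lt (by omega)]

end Derivation

section Invariant

variable {K : Type} [Field K] {n : ℕ}

theorem Dw_spoly {m : ℕ} (hm : 2 * m + 1 ≤ n) [NeZero (2 : K)] :
    Dw K n (spoly K n m) =
      ∑ i ∈ range m,
          (-1 : K) ^ i • (X ((i : ℕ) : Fin (n + 1)) * X ((2 * m - i : ℕ) : Fin (n + 1)))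
        + ((-1 : K) ^ m / 2) • X ((m : ℕ) : Fin (n + 1)) ^ 2 := by
  set c : ℕ → K := fun k => (-1 : K) ^ k * ((2 * m + 1 - 2 * k : ℕ) : K) / 2
  have hleib : ∀ k ∈ range (m + 1),
      Dw K n (c k • (X ((k : ℕ) : Fin (n + 1)) * X ((2 * m + 1 - k : ℕ) : Fin (n + 1)))) =
        c k • (X ((k : ℕ) : Fin (n + 1)) * X ((2 * m - k : ℕ) : Fin (n + 1))) +
        c k • (X ((2 * m + 1 - k : ℕ) : Fin (n + 1)) *
          Dw K n (X ((k : ℕ) : Fin (n + 1)))) := by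
    intro k hk
    have hk : k ≤ m := Nat.lt_succ_iff.mp (mem_range.mp hk)
    rw [Derivation.map_smul, Derivation.leibniz, smul_add, smul_eq_mul, smul_eq_mul,
      show 2 * m + 1 - k = 2 * m - k + 1 by omega, Dw_X_natCast_succ (by omega)]
  have hc : ∀ i < m, c i + c (i + 1) = (-1 : K) ^ i := by
    intro i hi
    simp only [c]
    rw [Nat.cast_sub (by omega), Nat.cast_sub (by omega)]
    push_cast
    field_simp
    ring
  rw [spoly, map_sum, sum_congr rfl hleib, sum_add_distrib, sum_range_succ, sum_range_succ',
    Dw_X_natCast_zero, mul_zero, smul_zero, add_zero, add_right_comm, ← sum_add_distrib]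
  congr 1
  · refine sum_congr rfl fun i hi => ?_
    have hi : i < m := mem_range.mp hi
    rw [Dw_X_natCast_succ (by omega), show 2 * m + 1 - (i + 1) = 2 * m - i by omega,
      mul_comm (X _) (X ((i : ℕ) : Fin (n + 1))), ← add_smul, hc i hi]
  · simp only [c]
    rw [show 2 * m - m = m by omega, show 2 * m + 1 - 2 * m = 1 by omega, sq]
    simp

theorem isHomogeneous_spoly (m : ℕ) : (spoly K n m).IsHomogeneous 2 := by
  refine IsHomogeneous.sum _ _ _ fun k _ => ?_
  rw [smul_eq_C_mul]
  exact ((isHomogeneous_X K _).mul (isHomogeneous_X K _)).C_mul _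

theorem isHomogeneous_Dw_spoly {m : ℕ} (hm : 2 * m + 1 ≤ n) [NeZero (2 : K)] :
    (Dw K n (spoly K n m)).IsHomogeneous 2 := by
  rw [Dw_spoly hm]
  refine (IsHomogeneous.sum _ _ _ fun i _ => ?_).add ?_ <;> rw [smul_eq_C_mul]
  · exact ((isHomogeneous_X K _).mul (isHomogeneous_X K _)).C_mul _
  · exact ((isHomogeneous_X K _).pow 2).C_mul _

theorem aeval_spoly (ψ : ℕ → K) {m : ℕ} (hm : 2 * m + 1 ≤ n) :
    aeval (ψ ∘ Fin.val) (spoly K n m) =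
      ∑ k ∈ range (m + 1),
        (-1 : K) ^ k * ((2 * m + 1 - 2 * k : ℕ) : K) / 2 * (ψ k * ψ (2 * m + 1 - k)) := by
  rw [spoly, map_sum]
  refine sum_congr rfl fun k hk => ?_
  have hk : k ≤ m := Nat.lt_succ_iff.mp (mem_range.mp hk)
  rw [map_smul, map_mul, aeval_X_natCast ψ (by omega), aeval_X_natCast ψ (by omega), smul_eq_mul]

theorem aeval_Dw_spoly (ψ : ℕ → K) {m : ℕ} (hm : 2 * m + 1 ≤ n) [NeZero (2 : K)] :
    aeval (ψ ∘ Fin.val) (Dw K n (spoly K n m)) =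
      ∑ i ∈ range m, (-1 : K) ^ i * (ψ i * ψ (2 * m - i)) + (-1 : K) ^ m / 2 * ψ m ^ 2 := by
  rw [Dw_spoly hm, map_add, map_sum, map_smul, map_pow, aeval_X_natCast ψ (by omega), smul_eq_mul]
  congr 1
  refine sum_congr rfl fun i hi => ?_
  have hi : i < m := mem_range.mp hi
  rw [map_smul, map_mul, aeval_X_natCast ψ (by omega), aeval_X_natCast ψ (by omega), smul_eq_mul]

/-- The paper's `ε_s(a)`, with the nilpotency index `ν(a)` as an explicit parameter `ν`. -/
noncomputable def epsilon (s a : MvPolynomial (Fin (n + 1)) K) (ν : ℕ) :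
    MvPolynomial (Fin (n + 1)) K :=
  ∑ k ∈ range (ν + 1),
    ((-1 : K) ^ k / (k.factorial : K)) • ((⇑(Dw K n))^[k] a * s ^ k * Dw K n s ^ (ν - k))

theorem isHomogeneous_epsilon {s a : MvPolynomial (Fin (n + 1)) K} {d e ν : ℕ}
    (ha : ∀ k ≤ ν, ((⇑(Dw K n))^[k] a).IsHomogeneous d) (hs : s.IsHomogeneous e)
    (hDs : (Dw K n s).IsHomogeneous e) : (epsilon s a ν).IsHomogeneous (e * ν + d) := by
  refine IsHomogeneous.sum _ _ _ fun k hk => ?_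
  have hk : k ≤ ν := Nat.lt_succ_iff.mp (mem_range.mp hk)
  rw [smul_eq_C_mul]
  refine IsHomogeneous.C_mul ?_ _
  rw [show e * ν + d = d + e * k + e * (ν - k) by
    rw [add_assoc, ← mul_add, Nat.add_sub_cancel' hk, add_comm]]
  exact ((ha k hk).mul (hs.pow k)).mul (hDs.pow (ν - k))

theorem aeval_epsilon_of_aeval_eq_zero {s a : MvPolynomial (Fin (n + 1)) K} (ν : ℕ)
    (φ : Fin (n + 1) → K) (hs : aeval φ s = 0) :
    aeval φ (epsilon s a ν) = aeval φ a * aeval φ (Dw K n s) ^ ν := by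
  rw [epsilon, map_sum, sum_range_succ', sum_eq_zero fun k _ => ?_]
  · simp
  · simp only [map_smul, map_mul, map_pow, hs, zero_pow k.succ_ne_zero, mul_zero, zero_mul,
      smul_zero]

theorem exists_aeval_spoly_eq_zero_and_aeval_Dw_spoly_ne_zero [NeZero (2 : K)] {m j : ℕ}
    (hm : 1 ≤ m) (hmj : m ≤ j) (hmn : 2 * m + 1 ≤ n) :
    ∃ ψ : ℕ → K, ψ j = 1 ∧ aeval (ψ ∘ Fin.val) (spoly K n m) = 0 ∧
      aeval (ψ ∘ Fin.val) (Dw K n (spoly K n m)) ≠ 0 := by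
  rcases eq_or_ne j (m + 1) with rfl | hj
  · refine ⟨fun i => if i = m - 1 ∨ i = m + 1 then 1 else 0, by simp, ?_, ?_⟩
    · rw [aeval_spoly _ hmn]
      refine sum_eq_zero fun k hk => ?_
      have hk : k ≤ m := Nat.lt_succ_iff.mp (mem_range.mp hk)
      split_ifs <;> first | (exfalso; omega) | simp
    · rw [aeval_Dw_spoly _ hmn, sum_eq_single_of_mem (m - 1) (mem_range.mpr (by omega))]
      · simp [show m ≠ m - 1 by omega, show 2 * m - (m - 1) = m + 1 by omega]
      · intro i hi hne
        have hi : i < m := mem_range.mp hi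
        split_ifs <;> first | (exfalso; omega) | simp
  · refine ⟨fun i => if i = m ∨ i = j then 1 else 0, by simp, ?_, ?_⟩
    · rw [aeval_spoly _ hmn]
      refine sum_eq_zero fun k hk => ?_
      have hk : k ≤ m := Nat.lt_succ_iff.mp (mem_range.mp hk)
      split_ifs <;> first | (exfalso; omega) | simp
    · rw [aeval_Dw_spoly _ hmn, sum_eq_zero fun i hi => ?_]
      · simpa using two_ne_zero
      · have hi : i < m := mem_range.mp hi
        split_ifs <;> first | (exfalso; omega) | simp

end Invariant

theorem stmt19 (K : Type) [Field K] [CharZero K] (n m j : ℕ)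
    (h1 : 1 ≤ m) (h2 : m ≤ (n - 1) / 2) (h3 : m ≤ j) (h4 : j ≤ n) :
    (Dw K n (spoly K n m)).totalDegree ≤ 2 * n + 1 ∧
    (∑ k ∈ Finset.range (j + 1),
        (((-1 : K) ^ k / (k.factorial : K)) •
          ((⇑(Dw K n))^[k] (X ((j : ℕ) : Fin (n + 1))) * (spoly K n m) ^ k *
            (Dw K n (spoly K n m)) ^ (j - k)))).totalDegree = 2 * j + 1 ∧
    2 * j + 1 ≤ 2 * n + 1 := by
  have hmn : 2 * m + 1 ≤ n := by omega
  have hf := isHomogeneous_Dw_spoly (K := K) hmn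
  refine ⟨hf.totalDegree_le.trans (by omega), ?_, by omega⟩
  change (epsilon (spoly K n m) (X ((j : ℕ) : Fin (n + 1))) j).totalDegree = 2 * j + 1
  have hε := isHomogeneous_epsilon (a := X ((j : ℕ) : Fin (n + 1))) (ν := j)
    (fun k _ => isHomogeneous_Dw_iterate_X k _) (isHomogeneous_spoly m) hf
  refine hε.totalDegree fun hzero => ?_
  obtain ⟨ψ, hψj, hs, hDs⟩ :=
    exists_aeval_spoly_eq_zero_and_aeval_Dw_spoly_ne_zero (K := K) h1 h3 hmn
  have hval := aeval_epsilon_of_aeval_eq_zero (a := X ((j : ℕ) : Fin (n + 1))) j _ hs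
  rw [hzero, map_zero, aeval_X_natCast ψ h4, hψj, one_mul] at hval
  exact pow_ne_zero j hDs hval.symm
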